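/- Let $a_1, a_2, a_3 \ge 0$ and $\delta \in (0,1)$, and define $Q_1(K) = \frac{K}{K-1+\delta}\left( \frac{a_1}{K} + a_2 K + a_3 (2K-1)(K-1) \right)$ for integers $K \ge 1$. If $a_1/\delta > (3 - 1/\delta) a_2 + 6 a_3$, then $Q_1(2) < Q_1(1)$. -/
import Mathlib


theorem stmt_13 (a1 a2 a3 δ : ℝ) (ha1 : 0 ≤ a1) (ha2 : 0 ≤ a2) (ha3 : 0 ≤ a3)
    (hδ : δ ∈ Set.Ioo (0:ℝ) 1)
    (Q1 : ℕ → ℝ)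
    (hQ1 : ∀ K : ℕ, Q1 K =
      (K : ℝ) / ((K : ℝ) - 1 + δ) *
        (a1 / (K : ℝ) + a2 * (K : ℝ) + a3 * (2 * (K : ℝ) - 1) * ((K : ℝ) - 1)))
    (hcond : a1 / δ > (3 - 1 / δ) * a2 + 6 * a3) :
    Q1 2 < Q1 1 := by
  obtain ⟨h0, h1⟩ := hδ
  rw [hQ1 1, hQ1 2]
  push_cast
  have hδ1 : (0:ℝ) < 1 + δ := by linarith
  have hkey : δ * ((1 + δ) * ((3 - 1/δ) * a2 + 6 * a3)) < δ * ((1 + δ) * (a1 / δ)) := by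
    have := mul_pos h0 hδ1
    nlinarith [hcond]
  have h2 : δ * ((1+δ) * (a1/δ)) = (1+δ) * a1 := by field_simp; try ring
  have h3 : δ * ((1+δ) * ((3 - 1/δ) * a2 + 6*a3)) = (1+δ)*(3*δ*a2 + 6*δ*a3) - (1+δ)*a2 := by
    field_simp; try ring
  rw [h2, h3] at hkey
  rw [div_mul_eq_mul_div, div_mul_eq_mul_div, div_lt_div_iff₀ (by linarith) (by linarith)]
  ring_nf
  nlinarith [hkey, mul_nonneg ha3 h0.le]
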